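/- Fix q ∈ (0,1]ⁿ satisfying δ_i ≤ δ'_i + (1 − 1/q_i)·ω_i for every i, fix nonnegative initial vectors x(0), y(0) ∈ ℝⁿ, and let Q ⊆ {1,…,n}×{1,…,n} be a candidate edge set such that ρ(M_{−P}(q)) < 1 for every P ⊆ Q. Then the set function P ↦ σ^U(P) = 1ᵀ·(A + Q(I − A))^{−1}·(D·(I − M_{−P}(q))^{−1} − I)·(x(0) + Q·y(0)) is supermodular on subsets of Q: for all P ⊆ P' ⊆ Q and every edge e ∈ Q \ P', one has σ^U(P ∪ {e}) − σ^U(P) ≤ σ^U(P' ∪ {e}) − σ^U(P'). (Second part of Lemma 1.) -/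

import Mathlib

open Matrix Filter Finset

/-- Spectral radius of a real square matrix: the maximum modulus of its complex
eigenvalues (elements of the spectrum of the matrix viewed over `ℂ`). -/
noncomputable def specRad {n : ℕ} (M : Matrix (Fin n) (Fin n) ℝ) : ℝ :=
  sSup {r : ℝ | ∃ μ : ℂ, μ ∈ spectrum ℂ (M.map (Complex.ofReal)) ∧ r = ‖μ‖}

/-- The matrix `B` with the entries indexed by the edge set `P` deleted (set to `0`). -/
def Bdel {n : ℕ} (B : Matrix (Fin n) (Fin n) ℝ) (P : Finset (Fin n × Fin n)) :
    Matrix (Fin n) (Fin n) ℝ :=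
  Matrix.of fun i j => if (i, j) ∈ P then 0 else B i j

/-- The upper-bound set function
`σᵁ(P) = 1ᵀ·(A + Q(I − A))⁻¹·(D·(I − M₋ₚ(q))⁻¹ − I)·(x0 + Q·y0)`. -/
noncomputable def sigmaU {n : ℕ} (α ω δ δ' s q x0 y0 : Fin n → ℝ)
    (B : Matrix (Fin n) (Fin n) ℝ) (P : Finset (Fin n × Fin n)) : ℝ :=
  (fun _ => (1 : ℝ)) ⬝ᵥ
    ((Matrix.diagonal α + Matrix.diagonal q * (1 - Matrix.diagonal α))⁻¹ *
      (Matrix.diagonal δ *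
        (1 - (1 - Matrix.diagonal (fun i => min (δ i) (δ' i + (1 - 1 / q i) * ω i)) +
          (Matrix.diagonal α + Matrix.diagonal q * (1 - Matrix.diagonal α)) *
            Matrix.diagonal s * Bdel B P))⁻¹ - 1)) *ᵥ
      (x0 + Matrix.diagonal q *ᵥ y0)

/-!
Write `M P` for `M₋ₚ(q)`. These matrices are entrywise nonnegative and antitone in `P`, and
deleting an edge `e ∉ P` subtracts the same nonnegative matrix `E` (supported at `e`) from every
`M P`. As `ρ(M P) < 1`, Gelfand's formula gives the Neumann series `(I - M P)⁻¹ = ∑ₖ (M P)ᵏ`,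
so `(I - M P)⁻¹` is entrywise nonnegative and antitone in `P`. By the resolvent identity
`(I - M P)⁻¹ - (I - M (P ∪ {e}))⁻¹ = (I - M P)⁻¹ E (I - M (P ∪ {e}))⁻¹`,
the decrease of `(I - M P)⁻¹` caused by deleting `e` shrinks as `P` grows, and `σᵁ(P)` is a
constant plus a linear functional of `(I - M P)⁻¹` with nonnegative coefficients.
-/

theorem HasSum.matrix_apply {ι m n R : Type*} [AddCommMonoid R] [TopologicalSpace R]
    {f : ι → Matrix m n R} {a : Matrix m n R} (h : HasSum f a) (i : m) (j : n) :
    HasSum (fun k => f k i j) (a i j) :=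
  Pi.hasSum.mp (Pi.hasSum.mp h i) j

namespace Matrix

section EntrywiseOrder

variable {l m n R : Type*} [Semiring R] [PartialOrder R] [IsOrderedRing R]

theorem mul_apply_nonneg [Fintype m] {A : Matrix l m R} {B : Matrix m n R}
    (hA : ∀ i j, 0 ≤ A i j) (hB : ∀ i j, 0 ≤ B i j) (i : l) (k : n) : 0 ≤ (A * B) i k :=
  sum_nonneg fun j _ => mul_nonneg (hA i j) (hB j k)

theorem mul_apply_mono_left [Fintype m] {A A' : Matrix l m R} {B : Matrix m n R}
    (hB : ∀ i j, 0 ≤ B i j) (h : ∀ i j, A i j ≤ A' i j) (i : l) (k : n) :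
    (A * B) i k ≤ (A' * B) i k :=
  sum_le_sum fun j _ => mul_le_mul_of_nonneg_right (h i j) (hB j k)

theorem mul_apply_mono_right [Fintype m] {A : Matrix l m R} {B B' : Matrix m n R}
    (hA : ∀ i j, 0 ≤ A i j) (h : ∀ i j, B i j ≤ B' i j) (i : l) (k : n) :
    (A * B) i k ≤ (A * B') i k :=
  sum_le_sum fun j _ => mul_le_mul_of_nonneg_left (h j k) (hA i j)

theorem pow_apply_mono [Fintype n] [DecidableEq n] {A A' : Matrix n n R}
    (hA : ∀ i j, 0 ≤ A i j) (h : ∀ i j, A i j ≤ A' i j) (k : ℕ) (i j : n) :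
    (A ^ k) i j ≤ (A' ^ k) i j := by
  induction k generalizing i j with
  | zero => rfl
  | succ k ih =>
    rw [pow_succ, pow_succ]
    exact (mul_apply_mono_left hA ih i j).trans
      (mul_apply_mono_right (pow_apply_nonneg (fun i j => (hA i j).trans (h i j)) k) h i j)

theorem dotProduct_mulVec_mono [Fintype l] [Fintype m] {u : l → R} {v : m → R}
    {A A' : Matrix l m R} (hu : ∀ i, 0 ≤ u i) (hv : ∀ j, 0 ≤ v j)
    (h : ∀ i j, A i j ≤ A' i j) : u ⬝ᵥ (A *ᵥ v) ≤ u ⬝ᵥ (A' *ᵥ v) :=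
  sum_le_sum fun i _ => mul_le_mul_of_nonneg_left
    (sum_le_sum fun j _ => mul_le_mul_of_nonneg_right (h i j) (hv j)) (hu i)

end EntrywiseOrder

theorem diagonal_apply_nonneg {n R : Type*} [DecidableEq n] [Zero R] [Preorder R] {d : n → R}
    (h : ∀ i, 0 ≤ d i) (i j : n) : 0 ≤ diagonal d i j := by
  rw [diagonal_apply]
  split_ifs
  exacts [h i, le_rfl]

theorem diagonal_add_diagonal_mul_one_sub {n R : Type*} [Fintype n] [DecidableEq n] [CommRing R]
    (a b : n → R) :
    diagonal a + diagonal b * (1 - diagonal a) = diagonal fun i => a i + b i * (1 - a i) := by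
  rw [← diagonal_one, diagonal_sub, diagonal_mul_diagonal, diagonal_add]

section NeumannSeries

variable {n R : Type*} [Fintype n] [DecidableEq n]

theorem isUnit_one_sub_of_summable_pow [CommRing R] [TopologicalSpace R] [IsTopologicalRing R]
    [T2Space R] {M : Matrix n n R} (h : Summable (M ^ ·)) : IsUnit (1 - M) :=
  (isUnit_iff_isUnit_det _).mpr (isUnit_det_of_right_inverse h.one_sub_mul_tsum_pow)

theorem hasSum_pow_inv_one_sub [CommRing R] [TopologicalSpace R] [IsTopologicalRing R]
    [T2Space R] {M : Matrix n n R} (h : Summable (M ^ ·)) : HasSum (M ^ ·) (1 - M)⁻¹ := by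
  rw [inv_eq_right_inv h.one_sub_mul_tsum_pow]
  exact h.hasSum

theorem inv_one_sub_apply_nonneg {M : Matrix n n ℝ} (hM : ∀ i j, 0 ≤ M i j)
    (h : Summable (M ^ ·)) (i j : n) : 0 ≤ (1 - M)⁻¹ i j :=
  HasSum.nonneg (fun k => pow_apply_nonneg hM k i j)
    ((hasSum_pow_inv_one_sub h).matrix_apply i j)

theorem inv_one_sub_apply_mono {M M' : Matrix n n ℝ} (hM : ∀ i j, 0 ≤ M i j)
    (hMM' : ∀ i j, M i j ≤ M' i j) (h : Summable (M ^ ·)) (h' : Summable (M' ^ ·)) (i j : n) :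
    (1 - M)⁻¹ i j ≤ (1 - M')⁻¹ i j :=
  hasSum_le (fun k => pow_apply_mono hM hMM' k i j)
    ((hasSum_pow_inv_one_sub h).matrix_apply i j)
    ((hasSum_pow_inv_one_sub h').matrix_apply i j)

theorem inv_one_sub_sub_inv_one_sub {M M' : Matrix n n ℝ} (h : Summable (M ^ ·))
    (h' : Summable (M' ^ ·)) : (1 - M)⁻¹ - (1 - M')⁻¹ = (1 - M)⁻¹ * (M - M') * (1 - M')⁻¹ := by
  rw [inv_sub_inv (iff_of_true (isUnit_one_sub_of_summable_pow h)
    (isUnit_one_sub_of_summable_pow h')), sub_sub_sub_cancel_left]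

theorem inv_one_sub_sub_inv_one_sub_mono {N K N' K' : Matrix n n ℝ}
    (hK'0 : ∀ i j, 0 ≤ K' i j) (hK'K : ∀ i j, K' i j ≤ K i j) (hKN : ∀ i j, K i j ≤ N i j)
    (hE : N - K = N' - K') (hN : Summable (N ^ ·)) (hK : Summable (K ^ ·))
    (hN' : Summable (N' ^ ·)) (hK' : Summable (K' ^ ·)) (i j : n) :
    ((1 - N')⁻¹ - (1 - K')⁻¹) i j ≤ ((1 - N)⁻¹ - (1 - K)⁻¹) i j := by
  have hE0 : ∀ i j, 0 ≤ (N - K) i j := fun i j => sub_nonneg.mpr (hKN i j)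
  have hN'eq : N' = K' + (N - K) := by rw [hE, add_sub_cancel]
  have hN'0 : ∀ i j, 0 ≤ N' i j := fun i j => by
    rw [hN'eq]; exact add_nonneg (hK'0 i j) (hE0 i j)
  have hN'N : ∀ i j, N' i j ≤ N i j := fun i j => by
    rw [hN'eq, add_apply, sub_apply]; linarith [hK'K i j]
  have hN0 : ∀ i j, 0 ≤ N i j := fun i j => (hN'0 i j).trans (hN'N i j)
  rw [inv_one_sub_sub_inv_one_sub hN hK, inv_one_sub_sub_inv_one_sub hN' hK', ← hE]
  calc ((1 - N')⁻¹ * (N - K) * (1 - K')⁻¹) i j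
      ≤ ((1 - N)⁻¹ * (N - K) * (1 - K')⁻¹) i j :=
        mul_apply_mono_left (inv_one_sub_apply_nonneg hK'0 hK')
          (mul_apply_mono_left hE0 (inv_one_sub_apply_mono hN'0 hN'N hN' hN)) i j
    _ ≤ ((1 - N)⁻¹ * (N - K) * (1 - K)⁻¹) i j :=
        mul_apply_mono_right
          (mul_apply_nonneg (inv_one_sub_apply_nonneg hN0 hN) hE0)
          (inv_one_sub_apply_mono hK'0 hK'K hK' hK) i j

end NeumannSeries

end Matrix

theorem spectrum.summable_pow_of_spectralRadius_lt_one {A : Type*} [NormedRing A]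
    [NormedAlgebra ℂ A] [CompleteSpace A] {a : A} (h : spectralRadius ℂ a < 1) :
    Summable (a ^ ·) := by
  obtain ⟨r, har, hr1⟩ := ENNReal.lt_iff_exists_nnreal_btwn.mp h
  have hpow : ∀ᶠ k : ℕ in atTop, ‖a ^ k‖ ≤ r ^ k := by
    filter_upwards [(pow_nnnorm_pow_one_div_tendsto_nhds_spectralRadius a).eventually_lt_const har,
      eventually_gt_atTop 0] with k hk hk0
    rw [one_div, ENNReal.rpow_inv_lt_iff (by positivity), ENNReal.rpow_natCast] at hk
    exact_mod_cast hk.le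
  exact .of_norm_bounded_eventually_nat
    (summable_geometric_of_lt_one r.coe_nonneg (by exact_mod_cast hr1)) hpow

theorem spectralRadius_map_ofReal_le_specRad {n : ℕ} (M : Matrix (Fin n) (Fin n) ℝ) :
    spectralRadius ℂ (M.map Complex.ofReal) ≤ ENNReal.ofReal (specRad M) := by
  have hbdd : BddAbove {r : ℝ | ∃ μ : ℂ, μ ∈ spectrum ℂ (M.map Complex.ofReal) ∧ r = ‖μ‖} := by
    refine ((Matrix.finite_spectrum (M.map Complex.ofReal)).image fun μ : ℂ => ‖μ‖).bddAbove.mono ?_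
    rintro _ ⟨μ, hμ, rfl⟩
    exact ⟨μ, hμ, rfl⟩
  refine iSup₂_le fun μ hμ => ?_
  rw [← enorm_eq_nnnorm, ← ofReal_norm]
  exact ENNReal.ofReal_le_ofReal (le_csSup hbdd ⟨μ, hμ, rfl⟩)

theorem summable_pow_of_specRad_lt_one {n : ℕ} {M : Matrix (Fin n) (Fin n) ℝ}
    (h : specRad M < 1) : Summable (M ^ ·) := by
  -- any Banach algebra norm on complex matrices will do: `Summable` only sees the topology
  let _ := Matrix.linftyOpNormedRing (n := Fin n) (α := ℂ)
  let _ := Matrix.linftyOpNormedAlgebra (n := Fin n) (R := ℂ) (α := ℂ)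
  have hc : Summable ((M.map Complex.ofReal) ^ ·) :=
    spectrum.summable_pow_of_spectralRadius_lt_one
      ((spectralRadius_map_ofReal_le_specRad M).trans_lt (ENNReal.ofReal_lt_one.mpr h))
  have hre := hc.map (Complex.reAddGroupHom.mapMatrix (m := Fin n) (n := Fin n))
    (continuous_id.matrix_map Complex.continuous_re)
  convert hre using 1
  funext k
  change M ^ k = ((M.map Complex.ofRealHom) ^ k).map Complex.re
  rw [← Matrix.map_pow, Matrix.map_map]
  ext
  simp

section Bdel

variable {n : ℕ} {B : Matrix (Fin n) (Fin n) ℝ}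

theorem Bdel_apply_nonneg (hB : ∀ i j, 0 ≤ B i j) (P : Finset (Fin n × Fin n)) (i j : Fin n) :
    0 ≤ Bdel B P i j := by
  simp only [Bdel, of_apply]
  split_ifs
  exacts [le_rfl, hB i j]

theorem Bdel_apply_anti (hB : ∀ i j, 0 ≤ B i j) {P P' : Finset (Fin n × Fin n)} (h : P ⊆ P')
    (i j : Fin n) : Bdel B P' i j ≤ Bdel B P i j := by
  simp only [Bdel, of_apply]
  split_ifs
  · exact le_rfl
  · exact hB i j
  · exact absurd (h ‹(i, j) ∈ P›) ‹_›
  · exact le_rfl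

theorem Bdel_sub_Bdel_insert {P : Finset (Fin n × Fin n)} {e : Fin n × Fin n} (he : e ∉ P) :
    Bdel B P - Bdel B (insert e P) = single e.1 e.2 (B e.1 e.2) := by
  ext i j
  simp only [Bdel, Matrix.sub_apply, of_apply, mem_insert, single_apply]
  by_cases hij : (i, j) = e
  · subst hij; simp [he]
  · have : ¬(e.1 = i ∧ e.2 = j) := fun ⟨h1, h2⟩ => hij (by rw [← h1, ← h2])
    simp [hij, this]

theorem inv_one_sub_add_mul_Bdel_supermodular {X L : Matrix (Fin n) (Fin n) ℝ}
    (hX : ∀ i j, 0 ≤ X i j) (hL : ∀ i j, 0 ≤ L i j) (hB : ∀ i j, 0 ≤ B i j)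
    {P P' : Finset (Fin n × Fin n)} {e : Fin n × Fin n} (hPP' : P ⊆ P') (he : e ∉ P')
    (hsum : ∀ R ⊆ insert e P', Summable ((X + L * Bdel B R) ^ ·)) (i j : Fin n) :
    ((1 - (X + L * Bdel B P'))⁻¹ - (1 - (X + L * Bdel B (insert e P')))⁻¹) i j ≤
      ((1 - (X + L * Bdel B P))⁻¹ - (1 - (X + L * Bdel B (insert e P)))⁻¹) i j := by
  have hanti : ∀ {R R'}, R ⊆ R' → ∀ i j, (X + L * Bdel B R') i j ≤ (X + L * Bdel B R) i j :=
    fun h i j => add_le_add_right (mul_apply_mono_right hL (Bdel_apply_anti hB h) i j) _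
  have hdiff : ∀ {R}, e ∉ R → (X + L * Bdel B R) - (X + L * Bdel B (insert e R)) =
      L * single e.1 e.2 (B e.1 e.2) := fun h => by
    rw [add_sub_add_left_eq_sub, ← Matrix.mul_sub, Bdel_sub_Bdel_insert h]
  refine inv_one_sub_sub_inv_one_sub_mono (N := X + L * Bdel B P) (K := X + L * Bdel B (insert e P))
    (N' := X + L * Bdel B P') (K' := X + L * Bdel B (insert e P'))
    (fun i j => add_nonneg (hX i j) (mul_apply_nonneg hL (Bdel_apply_nonneg hB _) i j))
    (hanti (insert_subset_insert e hPP')) (hanti (subset_insert e P))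
    (by rw [hdiff (fun h => he (hPP' h)), hdiff he])
    (hsum _ ((hPP'.trans (subset_insert e P')))) (hsum _ (insert_subset_insert e hPP'))
    (hsum _ (subset_insert e P')) (hsum _ subset_rfl) i j

end Bdel

/-- The paper's `M₋ₚ(q)`. -/
noncomputable def Mdel {n : ℕ} (α ω δ δ' s q : Fin n → ℝ) (B : Matrix (Fin n) (Fin n) ℝ)
    (P : Finset (Fin n × Fin n)) : Matrix (Fin n) (Fin n) ℝ :=
  1 - diagonal (fun i => min (δ i) (δ' i + (1 - 1 / q i) * ω i)) +
    (diagonal α + diagonal q * (1 - diagonal α)) * diagonal s * Bdel B P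

theorem sigmaU_sub_sigmaU {n : ℕ} (α ω δ δ' s q x0 y0 : Fin n → ℝ)
    (B : Matrix (Fin n) (Fin n) ℝ) (P₀ P₁ : Finset (Fin n × Fin n)) :
    sigmaU α ω δ δ' s q x0 y0 B P₁ - sigmaU α ω δ δ' s q x0 y0 B P₀ =
      (fun _ => 1) ⬝ᵥ (((diagonal α + diagonal q * (1 - diagonal α))⁻¹ *
        (diagonal δ * ((1 - Mdel α ω δ δ' s q B P₁)⁻¹ - (1 - Mdel α ω δ δ' s q B P₀)⁻¹))) *ᵥ
          (x0 + diagonal q *ᵥ y0)) := by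
  rw [sigmaU, sigmaU, Mdel, Mdel, ← dotProduct_sub, ← sub_mulVec, ← Matrix.mul_sub,
    sub_sub_sub_cancel_right, ← Matrix.mul_sub]

theorem sigmaU_supermodular_general
    (n : ℕ) (α ω δ δ' s : Fin n → ℝ)
    (hα : ∀ i, 0 ≤ α i ∧ α i ≤ 1)
    (hδ : ∀ i, 0 ≤ δ i ∧ δ i ≤ 1)
    (hs : ∀ i, 0 ≤ s i ∧ s i ≤ 1)
    (B : Matrix (Fin n) (Fin n) ℝ) (hB : ∀ i j, 0 ≤ B i j)
    (q : Fin n → ℝ) (hq : ∀ i, 0 < q i ∧ q i ≤ 1)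
    (x0 y0 : Fin n → ℝ) (hx0 : ∀ i, 0 ≤ x0 i) (hy0 : ∀ i, 0 ≤ y0 i)
    (Qc : Finset (Fin n × Fin n))
    (hρ : ∀ P ⊆ Qc, specRad
      (1 - Matrix.diagonal (fun i => min (δ i) (δ' i + (1 - 1 / q i) * ω i)) +
        (Matrix.diagonal α + Matrix.diagonal q * (1 - Matrix.diagonal α)) *
          Matrix.diagonal s * Bdel B P) < 1) :
    ∀ P P' : Finset (Fin n × Fin n), ∀ e : Fin n × Fin n,
      P ⊆ P' → P' ⊆ Qc → e ∈ Qc → e ∉ P' →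
      sigmaU α ω δ δ' s q x0 y0 B (insert e P) - sigmaU α ω δ δ' s q x0 y0 B P ≤
        sigmaU α ω δ δ' s q x0 y0 B (insert e P') - sigmaU α ω δ δ' s q x0 y0 B P' := by
  intro P P' e hPP' hP'Q heQ heP'
  have hg : ∀ i, 0 < α i + q i * (1 - α i) := fun i => by nlinarith [hα i, hq i]
  have hG := diagonal_add_diagonal_mul_one_sub α q
  have hGinv : (diagonal α + diagonal q * (1 - diagonal α))⁻¹ =
      diagonal fun i => (α i + q i * (1 - α i))⁻¹ := by
    rw [hG]
    exact inv_eq_left_inv (by simp [diagonal_mul_diagonal, (hg _).ne'])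
  have hX : ∀ i j, 0 ≤ (1 - diagonal fun i => min (δ i) (δ' i + (1 - 1 / q i) * ω i)) i j := by
    rw [← diagonal_one, diagonal_sub]
    exact diagonal_apply_nonneg fun i => sub_nonneg.mpr ((min_le_left _ _).trans (hδ i).2)
  have hL : ∀ i j, 0 ≤ ((diagonal α + diagonal q * (1 - diagonal α)) * diagonal s) i j := by
    rw [hG, diagonal_mul_diagonal]
    exact diagonal_apply_nonneg fun i => mul_nonneg (hg i).le (hs i).1
  rw [sigmaU_sub_sigmaU, sigmaU_sub_sigmaU]
  refine dotProduct_mulVec_mono (fun _ => zero_le_one) (fun j => ?_) fun i j => ?_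
  · rw [Pi.add_apply, mulVec_diagonal]
    exact add_nonneg (hx0 j) (mul_nonneg (hq j).1.le (hy0 j))
  rw [hGinv]
  refine mul_apply_mono_right (diagonal_apply_nonneg fun i => (inv_pos.mpr (hg i)).le)
    (mul_apply_mono_right (diagonal_apply_nonneg fun i => (hδ i).1) fun i j => ?_) i j
  have key := inv_one_sub_add_mul_Bdel_supermodular hX hL hB hPP' heP'
    (fun R hR => summable_pow_of_specRad_lt_one (hρ R (hR.trans (insert_subset heQ hP'Q)))) i j
  unfold Mdel
  rw [Matrix.sub_apply, Matrix.sub_apply] at key ⊢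
  linarith

/-- Lemma 1 (second part): `σᵁ` is supermodular on subsets of the candidate set. -/
theorem sigmaU_supermodular
    (n : ℕ) (hn : 1 ≤ n) (α ω δ δ' s : Fin n → ℝ)
    (hα : ∀ i, 0 ≤ α i ∧ α i ≤ 1) (hω : ∀ i, 0 ≤ ω i ∧ ω i ≤ 1)
    (hδ : ∀ i, 0 ≤ δ i ∧ δ i ≤ 1) (hδ' : ∀ i, 0 ≤ δ' i ∧ δ' i ≤ 1)
    (hs : ∀ i, 0 ≤ s i ∧ s i ≤ 1) (hωδ' : ∀ i, ω i + δ' i ≤ 1)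
    (B : Matrix (Fin n) (Fin n) ℝ) (hB : ∀ i j, 0 ≤ B i j)
    (q : Fin n → ℝ) (hq : ∀ i, 0 < q i ∧ q i ≤ 1)
    (hqδ : ∀ i, δ i ≤ δ' i + (1 - 1 / q i) * ω i)
    (x0 y0 : Fin n → ℝ) (hx0 : ∀ i, 0 ≤ x0 i) (hy0 : ∀ i, 0 ≤ y0 i)
    (Qc : Finset (Fin n × Fin n))
    (hρ : ∀ P ⊆ Qc, specRad
      (1 - Matrix.diagonal (fun i => min (δ i) (δ' i + (1 - 1 / q i) * ω i)) +
        (Matrix.diagonal α + Matrix.diagonal q * (1 - Matrix.diagonal α)) *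
          Matrix.diagonal s * Bdel B P) < 1) :
    ∀ P P' : Finset (Fin n × Fin n), ∀ e : Fin n × Fin n,
      P ⊆ P' → P' ⊆ Qc → e ∈ Qc → e ∉ P' →
      sigmaU α ω δ δ' s q x0 y0 B (insert e P) - sigmaU α ω δ δ' s q x0 y0 B P ≤
        sigmaU α ω δ δ' s q x0 y0 B (insert e P') - sigmaU α ω δ δ' s q x0 y0 B P' :=
  sigmaU_supermodular_general n α ω δ δ' s hα hδ hs B hB q hq x0 y0 hx0 hy0 Qc hρ
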